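/- arXiv:1705.09372 — 2 statements merged into one kernel-verified Lean document; each statement's English description precedes it below -/
import Mathlib

section
/- Fix an integer m ≥ 1, ε ∈ (0,1), and α > 0. Let X^n be uniformly distributed on {0,1}^n and let Y_(1)^n, …, Y_(m)^n be obtained from X^n by passing it through m independent binary erasure channels with erasure probability ε (each coordinate of each copy is independently replaced by an erasure symbol with probability ε, and otherwise equals the corresponding bit of X^n). Let Y' = (Y_(1)^n, …, Y_(m)^n) and, for each realization of Y', let G(·|Y') be a guessing function for the conditional distribution of X^n given Y'. Then lim_{n→∞} (1/n) log₂ E[G(X^n|Y')^α] = max_{λ∈[0,1]} ( αλ − D(λ‖ε^m) ). -/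
open Real Filter Finset

/-- Binary Rényi entropy of order `β` (base-2 logarithm). -/
noncomputable def Hb (β p : ℝ) : ℝ := (1 / (1 - β)) * Real.logb 2 (p ^ β + (1 - p) ^ β)

/-- Binary KL divergence `D(p‖q)` in bits (Lean's `logb 2 0 = 0` gives the `0·log 0 = 0` convention). -/
noncomputable def Dkl (p q : ℝ) : ℝ :=
  p * Real.logb 2 (p / q) + (1 - p) * Real.logb 2 ((1 - p) / (1 - q))

/-- Binary Shannon entropy in bits. -/
noncomputable def binEnt (p : ℝ) : ℝ := -(p * Real.logb 2 p) - (1 - p) * Real.logb 2 (1 - p)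

/-- `G` is a guessing function for the distribution `q` on the finite set `S`:
a bijection onto `{1, …, |S|}` ranking more likely elements first. -/
def IsGuessingFunction {S : Type*} [Fintype S] (q : S → ℝ) (G : S → ℕ) : Prop :=
  Function.Injective G ∧ (∀ x, G x ∈ Finset.Icc 1 (Fintype.card S)) ∧
    ∀ x y, q y < q x → G x < G y

/-- Distribution of `n` i.i.d. Bernoulli(`p`) bits (`true` has probability `p`). -/
noncomputable def bernDist (p : ℝ) (n : ℕ) (x : Fin n → Bool) : ℝ :=
  ∏ i, if x i then p else 1 - p

/-- Transition probability of a binary erasure channel with erasure probability `ε`: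
`none` is the erasure symbol. -/
noncomputable def becPr (ε : ℝ) (b : Bool) : Option Bool → ℝ
  | none => ε
  | some b' => if b' = b then 1 - ε else 0

/-- Joint distribution of a uniform `X^n` and the outputs `Y' = (Y₍₁₎,…,Y₍ₘ₎)` of `m`
independent BEC(`ε`) channels applied to `X^n`. -/
noncomputable def becJoint (ε : ℝ) (m n : ℕ) (x : Fin n → Bool)
    (y : Fin m → Fin n → Option Bool) : ℝ :=
  ((1 : ℝ) / 2) ^ n * ∏ j, ∏ i, becPr ε (x i) (y j i)

/-- Conditional distribution of `X^n` given `Y' = y` (junk value `0` off the support of `Y'`). -/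
noncomputable def becCond (ε : ℝ) (m n : ℕ) (y : Fin m → Fin n → Option Bool)
    (x : Fin n → Bool) : ℝ :=
  becJoint ε m n x y / ∑ x', becJoint ε m n x' y

/-- Joint distribution of a uniform `X^n` and the output of a single BEC(`ε`). -/
noncomputable def becJoint1 (ε : ℝ) (n : ℕ) (x : Fin n → Bool) (y : Fin n → Option Bool) : ℝ :=
  ((1 : ℝ) / 2) ^ n * ∏ i, becPr ε (x i) (y i)

/-- Conditional distribution of `X^n` given the output `y` of a single BEC(`ε`). -/
noncomputable def becCond1 (ε : ℝ) (n : ℕ) (y : Fin n → Option Bool) (x : Fin n → Bool) : ℝ :=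
  becJoint1 ε n x y / ∑ x', becJoint1 ε n x' y


/-!
Given the outputs `y`, the input is uniform on the `2 ^ k` strings compatible with `y`, where `k`
is the number of coordinates erased in all `m` copies. A guessing function ranks these strings
`1, …, 2 ^ k`, so the conditional moment is `2 ^ (-k) * ∑_{i ≤ 2 ^ k} i ^ α`, which lies within
the factor `α + 1` of `(2 ^ α) ^ k` (compare the sum with `∫ x ^ α`). Averaging `(2 ^ α) ^ k`
over the outputs factorizes over coordinates and gives `(1 - ε ^ m + ε ^ m * 2 ^ α) ^ n`. By
Gibbs' inequality, `log₂ (1 - p + p * 2 ^ α)` is the maximum of `α λ - D(λ‖p)`, attained at the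
tilted parameter `p * 2 ^ α / (1 - p + p * 2 ^ α)`.
-/

open InformationTheory

lemma mul_logb_div (B a : ℝ) {b : ℝ} (hb : b ≠ 0) :
    a * logb B (a / b) = a * logb B a - a * logb B b := by
  rcases eq_or_ne a 0 with rfl | ha
  · simp
  · rw [logb_div ha hb, mul_sub]

lemma Dkl_eq_neg_binEnt_sub (lam : ℝ) {q : ℝ} (hq0 : q ≠ 0) (hq1 : q ≠ 1) :
    Dkl lam q = -binEnt lam - lam * logb 2 q - (1 - lam) * logb 2 (1 - q) := by
  rw [Dkl, binEnt, mul_logb_div _ _ hq0, mul_logb_div _ _ (sub_ne_zero.2 hq1.symm)]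
  ring

lemma Dkl_eq_klFun (lam : ℝ) {q : ℝ} (hq0 : 0 < q) (hq1 : q < 1) :
    Dkl lam q = (q * klFun (lam / q) + (1 - q) * klFun ((1 - lam) / (1 - q))) / log 2 := by
  have hq1' : 0 < 1 - q := by linarith
  simp only [Dkl, klFun, logb]
  field_simp
  ring

lemma Dkl_nonneg {lam q : ℝ} (hlam : lam ∈ Set.Icc (0 : ℝ) 1) (hq0 : 0 < q) (hq1 : q < 1) :
    0 ≤ Dkl lam q := by
  rw [Dkl_eq_klFun lam hq0 hq1]
  have h1 : 0 ≤ klFun (lam / q) := klFun_nonneg (div_nonneg hlam.1 hq0.le)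
  have h2 : 0 ≤ klFun ((1 - lam) / (1 - q)) :=
    klFun_nonneg (div_nonneg (by linarith [hlam.2]) (by linarith))
  have : 0 < 1 - q := by linarith
  positivity

lemma Dkl_self (q : ℝ) : Dkl q q = 0 := by
  rcases eq_or_ne q 0 with rfl | h0
  · simp [Dkl]
  rcases eq_or_ne q 1 with rfl | h1
  · simp [Dkl]
  simp [Dkl, div_self h0, div_self (sub_ne_zero.2 h1.symm)]

lemma mul_sub_Dkl_eq (α lam : ℝ) {p : ℝ} (hp0 : 0 < p) (hp1 : p < 1) :
    α * lam - Dkl lam p =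
      logb 2 (1 - p + p * 2 ^ α) - Dkl lam (p * 2 ^ α / (1 - p + p * 2 ^ α)) := by
  set c := 1 - p + p * (2 : ℝ) ^ α
  have h2α : 0 < (2 : ℝ) ^ α := by positivity
  have hc : 0 < c := by nlinarith
  have hp' : p * 2 ^ α / c < 1 := by rw [div_lt_one hc]; linarith
  have hsub : 1 - p * 2 ^ α / c = (1 - p) / c := by field_simp; ring
  rw [Dkl_eq_neg_binEnt_sub lam hp0.ne' hp1.ne, Dkl_eq_neg_binEnt_sub lam (by positivity) hp'.ne,
    hsub, logb_div (by positivity) hc.ne', logb_div (by linarith) hc.ne',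
    logb_mul hp0.ne' h2α.ne', logb_rpow two_pos (by norm_num)]
  ring

theorem iSup_mul_sub_Dkl_eq_logb (α : ℝ) {p : ℝ} (hp0 : 0 < p) (hp1 : p < 1) :
    ⨆ lam : Set.Icc (0 : ℝ) 1, (α * (lam : ℝ) - Dkl lam p) = logb 2 (1 - p + p * 2 ^ α) := by
  have hc : 0 < 1 - p + p * (2 : ℝ) ^ α := by
    have := mul_pos hp0 (rpow_pos_of_pos two_pos α); linarith
  have hp'0 : 0 < p * 2 ^ α / (1 - p + p * 2 ^ α) := by positivity
  have hp'1 : p * 2 ^ α / (1 - p + p * 2 ^ α) < 1 := by rw [div_lt_one hc]; linarith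
  have hmax : IsMaxOn (fun lam => α * lam - Dkl lam p) (Set.Icc 0 1)
      (p * 2 ^ α / (1 - p + p * 2 ^ α)) := fun lam hlam => by
    simp only [Set.mem_ofPred_eq, mul_sub_Dkl_eq α _ hp0 hp1, Dkl_self]
    linarith [Dkl_nonneg hlam hp'0 hp'1]
  rw [hmax.iSup_eq (Set.mem_Icc.2 ⟨hp'0.le, hp'1.le⟩), mul_sub_Dkl_eq α _ hp0 hp1, Dkl_self,
    sub_zero]

lemma sum_Icc_rpow_le {α : ℝ} (hα : 0 ≤ α) (N : ℕ) :
    ∑ i ∈ Finset.Icc 1 N, (i : ℝ) ^ α ≤ N * (N : ℝ) ^ α := by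
  calc ∑ i ∈ Finset.Icc 1 N, (i : ℝ) ^ α ≤ ∑ _i ∈ Finset.Icc 1 N, (N : ℝ) ^ α :=
        Finset.sum_le_sum fun i hi =>
          rpow_le_rpow (Nat.cast_nonneg i) (Nat.cast_le.2 (Finset.mem_Icc.1 hi).2) hα
    _ = N * (N : ℝ) ^ α := by simp

lemma le_sum_Icc_rpow {α : ℝ} (hα : 0 ≤ α) (N : ℕ) :
    N * (N : ℝ) ^ α / (α + 1) ≤ ∑ i ∈ Finset.Icc 1 N, (i : ℝ) ^ α := by
  have hmono : MonotoneOn (fun x : ℝ => x ^ α) (Set.Icc 0 (0 + N)) :=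
    (monotoneOn_rpow_Ici_of_exponent_nonneg hα).mono Set.Icc_subset_Ici_self
  have hint : ∫ x in (0 : ℝ)..0 + N, x ^ α = N * (N : ℝ) ^ α / (α + 1) := by
    rw [integral_rpow (Or.inl (by linarith)), zero_add, zero_rpow (by linarith), sub_zero,
      rpow_add_one' (Nat.cast_nonneg N) (by linarith), mul_comm]
  have hsum : ∑ i ∈ Finset.range N, ((0 : ℝ) + ↑(i + 1)) ^ α =
      ∑ i ∈ Finset.Icc 1 N, (i : ℝ) ^ α := by
    rw [← Finset.Ico_add_one_right_eq_Icc, Finset.sum_Ico_eq_sum_range]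
    simp [add_comm]
  exact hint ▸ hsum ▸ hmono.integral_le_sum

lemma sum_Icc_two_pow_rpow_bounds {α : ℝ} (hα : 0 ≤ α) (k : ℕ) :
    (α + 1)⁻¹ * (2 ^ α) ^ k ≤ 1 / 2 ^ k * ∑ i ∈ Finset.Icc 1 (2 ^ k : ℕ), (i : ℝ) ^ α ∧
      1 / 2 ^ k * ∑ i ∈ Finset.Icc 1 (2 ^ k : ℕ), (i : ℝ) ^ α ≤ (2 ^ α) ^ k := by
  have hlow := le_sum_Icc_rpow hα (2 ^ k)
  have hup := sum_Icc_rpow_le hα (2 ^ k)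
  rw [Nat.cast_pow, Nat.cast_ofNat, ← rpow_pow_comm zero_le_two] at hlow hup
  have h2k : (0 : ℝ) < 2 ^ k := by positivity
  have hα1 : 0 < α + 1 := by linarith
  constructor
  · rw [div_le_iff₀ hα1] at hlow
    rw [one_div_mul_eq_div, le_div_iff₀ h2k, inv_mul_eq_div, div_mul_eq_mul_div,
      div_le_iff₀ hα1]
    linarith
  · rw [one_div_mul_eq_div, div_le_iff₀ h2k]
    linarith

lemma Finset.eq_Icc_card_of_union_eq_Icc {V U : Finset ℕ} {N : ℕ}
    (hunion : V ∪ U = Finset.Icc 1 N) (hlt : ∀ a ∈ V, ∀ b ∈ U, a < b) :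
    V = Finset.Icc 1 V.card := by
  have hinit : ∀ a ∈ V, Finset.Icc 1 a ⊆ V := fun a ha b hb => by
    have haN : a ∈ Finset.Icc 1 N := hunion ▸ Finset.mem_union_left U ha
    have hbN : b ∈ V ∪ U := by
      rw [hunion, Finset.mem_Icc] at *
      exact ⟨hb.1, hb.2.trans haN.2⟩
    rcases Finset.mem_union.1 hbN with hbV | hbU
    · exact hbV
    · exact absurd (hlt a ha b hbU) (Finset.mem_Icc.1 hb).2.not_gt
  refine Finset.eq_of_subset_of_card_le (fun a ha => Finset.mem_Icc.2 ⟨?_, ?_⟩) (by simp)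
  · exact (Finset.mem_Icc.1 (hunion ▸ Finset.mem_union_left U ha)).1
  · simpa using Finset.card_le_card (hinit a ha)

namespace IsGuessingFunction

variable {S : Type*} [Fintype S] {q : S → ℝ} {G : S → ℕ}

lemma of_div_const {s : ℝ} (hs : 0 < s) (hG : IsGuessingFunction (fun x => q x / s) G) :
    IsGuessingFunction q G :=
  ⟨hG.1, hG.2.1, fun x y hxy => hG.2.2 x y (div_lt_div_of_pos_right hxy hs)⟩

lemma image_univ [DecidableEq S] (hG : IsGuessingFunction q G) :
    Finset.univ.image G = Finset.Icc 1 (Fintype.card S) :=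
  Finset.eq_of_subset_of_card_le (fun _ ha => by
      obtain ⟨x, -, rfl⟩ := Finset.mem_image.1 ha
      exact hG.2.1 x)
    (by simp [Finset.card_image_of_injective _ hG.1])

lemma image_eq_Icc [DecidableEq S] (hG : IsGuessingFunction q G) {P : Finset S}
    (hP : ∀ x ∈ P, ∀ y ∉ P, q y < q x) : P.image G = Finset.Icc 1 P.card := by
  have hunion : P.image G ∪ Pᶜ.image G = Finset.Icc 1 (Fintype.card S) := by
    rw [← Finset.image_union, Finset.union_compl, hG.image_univ]
  have hlt : ∀ a ∈ P.image G, ∀ b ∈ Pᶜ.image G, a < b := by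
    simp only [Finset.mem_image, Finset.mem_compl]
    rintro _ ⟨x, hx, rfl⟩ _ ⟨y, hy, rfl⟩
    exact hG.2.2 x y (hP x hx y hy)
  rw [Finset.eq_Icc_card_of_union_eq_Icc hunion hlt, Finset.card_image_of_injective _ hG.1]

lemma sum_mul_comp_eq_of_uniform [DecidableEq S] (hG : IsGuessingFunction q G) {P : Finset S}
    {c : ℝ} (hc : 0 < c) (hq : ∀ x, q x = if x ∈ P then c else 0) (f : ℕ → ℝ) :
    ∑ x, q x * f (G x) = c * ∑ i ∈ Finset.Icc 1 P.card, f i := by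
  have hP : ∀ x ∈ P, ∀ y ∉ P, q y < q x := fun x hx y hy => by simp [hq, hx, hy, hc]
  rw [← hG.image_eq_Icc hP, Finset.sum_image fun x _ y _ h => hG.1 h, Finset.mul_sum]
  simp [hq]

end IsGuessingFunction

section ErasureChannel

variable {m n : ℕ}

def erasedEverywhere (y : Fin m → Fin n → Option Bool) : Finset (Fin n) :=
  {i | ∀ j, y j i = none}

def compatibleInputs (y : Fin m → Fin n → Option Bool) : Finset (Fin n → Bool) :=
  {x | ∀ j i, y j i ≠ some (!x i)}

noncomputable def erasureWeight (ε : ℝ) (y : Fin m → Fin n → Option Bool) : ℝ :=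
  ∏ j, ∏ i, if y j i = none then ε else 1 - ε

lemma becPr_eq_ite (ε : ℝ) (b : Bool) (o : Option Bool) :
    becPr ε b o = if o = some (!b) then 0 else if o = none then ε else 1 - ε := by
  rcases o with _ | b' <;> [rfl; cases b <;> cases b' <;> rfl]

lemma becJoint_eq_ite (ε : ℝ) (x : Fin n → Bool) (y : Fin m → Fin n → Option Bool) :
    becJoint ε m n x y =
      if x ∈ compatibleInputs y then (1 / 2) ^ n * erasureWeight ε y else 0 := by
  simp only [compatibleInputs, Finset.mem_filter, Finset.mem_univ, true_and]
  split_ifs with h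
  · simp only [becJoint, erasureWeight, becPr_eq_ite, h, if_false]
  · simp only [not_forall, not_not] at h
    obtain ⟨j, i, hji⟩ := h
    exact mul_eq_zero_of_right _ (Finset.prod_eq_zero (Finset.mem_univ j)
      (Finset.prod_eq_zero (Finset.mem_univ i) (by simp [becPr_eq_ite, hji])))

lemma becJoint_nonneg {ε : ℝ} (hε : ε ∈ Set.Icc (0 : ℝ) 1) (x : Fin n → Bool)
    (y : Fin m → Fin n → Option Bool) : 0 ≤ becJoint ε m n x y :=
  mul_nonneg (by positivity) (Finset.prod_nonneg fun j _ => Finset.prod_nonneg fun i _ => by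
    rw [becPr_eq_ite]; split_ifs <;> linarith [hε.1, hε.2])

lemma erasureWeight_pos {ε : ℝ} (hε : ε ∈ Set.Ioo (0 : ℝ) 1) (y : Fin m → Fin n → Option Bool) :
    0 < erasureWeight ε y :=
  Finset.prod_pos fun j _ => Finset.prod_pos fun i _ => by
    split_ifs <;> linarith [hε.1, hε.2]

lemma mem_compatibleInputs_iff {y : Fin m → Fin n → Option Bool} {x₀ : Fin n → Bool}
    (hx₀ : x₀ ∈ compatibleInputs y) (x : Fin n → Bool) :
    x ∈ compatibleInputs y ↔ ∀ i ∉ erasedEverywhere y, x i = x₀ i := by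
  simp only [compatibleInputs, erasedEverywhere, Finset.mem_filter, Finset.mem_univ,
    true_and, not_forall] at hx₀ ⊢
  constructor
  · rintro hx i ⟨j, hj⟩
    obtain ⟨b, hb⟩ := Option.ne_none_iff_exists'.1 hj
    have h1 := hx j i
    have h2 := hx₀ j i
    rw [hb] at h1 h2
    cases b <;> cases hxi : x i <;> cases hx₀i : x₀ i <;> simp_all
  · intro hx j i hji
    by_cases hi : ∃ j, y j i ≠ none
    · exact hx₀ j i (hx i hi ▸ hji)
    · simp only [not_exists, not_not] at hi
      simp [hi j] at hji

lemma card_compatibleInputs {y : Fin m → Fin n → Option Bool} {x₀ : Fin n → Bool}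
    (hx₀ : x₀ ∈ compatibleInputs y) :
    (compatibleInputs y).card = 2 ^ (erasedEverywhere y).card := by
  have : compatibleInputs y = Fintype.piFinset fun i =>
      if i ∈ erasedEverywhere y then Finset.univ else {x₀ i} := by
    ext x
    rw [mem_compatibleInputs_iff hx₀, Fintype.mem_piFinset]
    refine forall_congr' fun i => ?_
    split_ifs with hi <;> simp [hi]
  rw [this, Fintype.card_piFinset]
  simp [apply_ite Finset.card, Finset.prod_ite_mem]

lemma sum_becJoint_mul_guess {ε : ℝ} (hε : ε ∈ Set.Ioo (0 : ℝ) 1)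
    {y : Fin m → Fin n → Option Bool} {G : (Fin n → Bool) → ℕ}
    (hG : IsGuessingFunction (becCond ε m n y) G) (f : ℕ → ℝ) :
    ∑ x, becJoint ε m n x y * f (G x) = (∑ x, becJoint ε m n x y) *
      ((1 / 2 ^ (erasedEverywhere y).card) *
        ∑ i ∈ Finset.Icc 1 (2 ^ (erasedEverywhere y).card), f i) := by
  rcases (compatibleInputs y).eq_empty_or_nonempty with hC | ⟨x₀, hx₀⟩
  · simp [becJoint_eq_ite, hC]
  have hc : 0 < (1 / 2 : ℝ) ^ n * erasureWeight ε y := by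
    have := erasureWeight_pos hε y; positivity
  have htotal : ∑ x, becJoint ε m n x y =
      (1 / 2 : ℝ) ^ n * erasureWeight ε y * 2 ^ (erasedEverywhere y).card := by
    simp [becJoint_eq_ite, card_compatibleInputs hx₀, mul_comm]
  have hG' : IsGuessingFunction (fun x => becJoint ε m n x y) G :=
    hG.of_div_const (htotal ▸ by positivity)
  rw [hG'.sum_mul_comp_eq_of_uniform hc (becJoint_eq_ite ε · y), card_compatibleInputs hx₀,
    htotal]
  field_simp

/-- The factor of coordinate `i` in `becJoint ε m n x y * τ ^ #(erasedEverywhere y)`, where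
`b = x i` and `c = fun j => y j i`. -/
noncomputable def columnWeight (ε τ : ℝ) (b : Bool) (c : Fin m → Option Bool) : ℝ :=
  (∏ j, becPr ε b (c j)) * if ∀ j, c j = none then τ else 1

lemma sum_columnWeight (ε τ : ℝ) (b : Bool) :
    ∑ c : Fin m → Option Bool, columnWeight ε τ b c = 1 - ε ^ m + ε ^ m * τ := by
  have hsum : ∑ c : Fin m → Option Bool, ∏ j, becPr ε b (c j) = 1 := by
    rw [← Fintype.prod_sum]
    cases b <;> simp [becPr_eq_ite]
  have hite : ∀ c : Fin m → Option Bool, (if ∀ j, c j = none then τ else 1) =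
      1 + if c = fun _ => none then τ - 1 else 0 := fun c => by
    simp only [funext_iff]; split_ifs <;> ring
  simp only [columnWeight, hite, mul_add, mul_one, Finset.sum_add_distrib, hsum, mul_ite,
    mul_zero, Finset.sum_ite_eq', Finset.mem_univ, if_true]
  simp [becPr]
  ring

lemma sum_becJoint_mul_pow_card_erasedEverywhere (ε τ : ℝ) :
    ∑ y : Fin m → Fin n → Option Bool, ∑ x, becJoint ε m n x y * τ ^ (erasedEverywhere y).card =
      (1 - ε ^ m + ε ^ m * τ) ^ n := by
  have hcol : ∀ (x : Fin n → Bool) (y : Fin m → Fin n → Option Bool),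
      becJoint ε m n x y * τ ^ (erasedEverywhere y).card =
        (1 / 2) ^ n * ∏ i, columnWeight ε τ (x i) fun j => y j i := by
    intro x y
    rw [← Finset.prod_const τ, ← Fintype.prod_ite_mem, becJoint, Finset.prod_comm, mul_assoc,
      ← Finset.prod_mul_distrib]
    simp [erasedEverywhere, columnWeight]
  have hrow : ∀ x : Fin n → Bool, ∑ y : Fin m → Fin n → Option Bool,
      becJoint ε m n x y * τ ^ (erasedEverywhere y).card =
        (1 / 2) ^ n * (1 - ε ^ m + ε ^ m * τ) ^ n := by
    intro x
    simp_rw [hcol, ← Finset.mul_sum]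
    congr 1
    calc _ = ∑ y : Fin n → Fin m → Option Bool, ∏ i, columnWeight ε τ (x i) (y i) :=
          Fintype.sum_equiv (Equiv.piComm _) _ _ fun _ => rfl
      _ = ∏ i, ∑ c, columnWeight ε τ (x i) c :=
          (Fintype.prod_sum fun i c => columnWeight ε τ (x i) c).symm
      _ = _ := by simp [sum_columnWeight]
  rw [Finset.sum_comm, Finset.sum_congr rfl fun x _ => hrow x]
  simp

end ErasureChannel

lemma tendsto_one_div_mul_logb_of_le_of_le {B a b r : ℝ} (hB : 1 < B) (ha : 0 < a) (hr : 0 < r)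
    {u : ℕ → ℝ} (hlow : ∀ n, a * r ^ n ≤ u n) (hup : ∀ n, u n ≤ b * r ^ n) :
    Tendsto (fun n : ℕ => 1 / (n : ℝ) * logb B (u n)) atTop (nhds (logb B r)) := by
  have hb : 0 < b := ha.trans_le (by simpa using (hlow 0).trans (hup 0))
  have hlog : ∀ c, 0 < c → ∀ n : ℕ, logb B (c * r ^ n) = logb B c + n * logb B r :=
    fun c hc n => by rw [logb_mul hc.ne' (by positivity), logb_pow]
  have hlim : ∀ c, Tendsto (fun n : ℕ => 1 / (n : ℝ) * (c + n * logb B r)) atTop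
      (nhds (logb B r)) := fun c => by
    have := (tendsto_const_div_atTop_nhds_zero_nat c).add_const (logb B r)
    rw [zero_add] at this
    refine this.congr' ?_
    filter_upwards [eventually_gt_atTop 0] with n hn
    field_simp
  refine tendsto_of_tendsto_of_tendsto_of_le_of_le (hlim (logb B a)) (hlim (logb B b))
    (fun n => ?_) (fun n => ?_) <;> refine mul_le_mul_of_nonneg_left ?_ (by positivity)
  · rw [← hlog a ha]
    exact logb_le_logb_of_le hB (by positivity) (hlow n)
  · rw [← hlog b hb]
    exact logb_le_logb_of_le hB ((mul_pos ha (pow_pos hr n)).trans_le (hlow n)) (hup n)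

/-- Theorem 1 of the paper: the centralized guesswork exponent with `m`
agents under BEC(`ε`) side information is `max_{λ∈[0,1]} (αλ − D(λ‖ε^m))`. -/
theorem centralized_bec_guesswork_exponent
    (m : ℕ) (hm : 1 ≤ m) (ε : ℝ) (hε : ε ∈ Set.Ioo (0 : ℝ) 1) (α : ℝ) (hα : 0 < α)
    (G : ∀ n, (Fin m → Fin n → Option Bool) → (Fin n → Bool) → ℕ)
    (hG : ∀ n y, IsGuessingFunction (becCond ε m n y) (G n y)) :
    Tendsto
      (fun n : ℕ => (1 / (n : ℝ)) *
        Real.logb 2 (∑ y : Fin m → Fin n → Option Bool, ∑ x : Fin n → Bool,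
          becJoint ε m n x y * (G n y x : ℝ) ^ α))
      atTop
      (nhds (⨆ lam : Set.Icc (0 : ℝ) 1, (α * (lam : ℝ) - Dkl lam (ε ^ m)))) := by
  have hp0 : 0 < ε ^ m := pow_pos hε.1 m
  have hp1 : ε ^ m < 1 := pow_lt_one₀ hε.1.le hε.2 (by omega)
  have hc : 0 < 1 - ε ^ m + ε ^ m * 2 ^ α := by
    have := mul_pos hp0 (rpow_pos_of_pos two_pos α); linarith
  have hJ : ∀ n x y, 0 ≤ becJoint ε m n x y :=
    fun n => becJoint_nonneg (Set.Ioo_subset_Icc_self hε)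
  have hφ := sum_Icc_two_pow_rpow_bounds hα.le
  have hE : ∀ n, ∑ y : Fin m → Fin n → Option Bool, ∑ x, becJoint ε m n x y * (G n y x : ℝ) ^ α =
      ∑ y : Fin m → Fin n → Option Bool, ∑ x, becJoint ε m n x y *
        (1 / 2 ^ (erasedEverywhere y).card *
          ∑ i ∈ Finset.Icc 1 (2 ^ (erasedEverywhere y).card : ℕ), (i : ℝ) ^ α) :=
    fun n => Finset.sum_congr rfl fun y _ => by
      rw [sum_becJoint_mul_guess hε (hG n y) fun i => (i : ℝ) ^ α, Finset.sum_mul]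
  rw [iSup_mul_sub_Dkl_eq_logb α hp0 hp1]
  refine tendsto_one_div_mul_logb_of_le_of_le one_lt_two (inv_pos.2 (by linarith : 0 < α + 1))
    hc (b := 1) (fun n => ?_) (fun n => ?_) <;>
    rw [hE, ← sum_becJoint_mul_pow_card_erasedEverywhere]
  · rw [Finset.mul_sum]
    refine Finset.sum_le_sum fun y _ => ?_
    rw [Finset.mul_sum]
    refine Finset.sum_le_sum fun x _ => ?_
    rw [mul_left_comm]
    exact mul_le_mul_of_nonneg_left (hφ _).1 (hJ _ x y)
  · rw [one_mul]
    exact Finset.sum_le_sum fun y _ => Finset.sum_le_sum fun x _ =>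
      mul_le_mul_of_nonneg_left (hφ _).2 (hJ _ x y)
end

section
/- Fix δ ∈ [0,1/2) and α > 0. For each integer m ≥ 1, let X^n be uniformly distributed on {0,1}^n, let Y_(1)^n, …, Y_(m)^n be obtained from X^n by passing it through m independent binary symmetric channels with crossover probability δ, let Y' = (Y_(1)^n, …, Y_(m)^n), and for each realization of Y' let G(·|Y') be a guessing function for the conditional distribution of X^n given Y'. Define E_α^{(c)}(m) = lim_{n→∞} (1/n) log₂ E[G(X^n|Y')^α] (the centralized guesswork exponent for m agents). Then lim_{m→∞} E_α^{(c)}(m) = 0. -/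
/-!
Arikan's bound `G(x|y) ≤ ∑_{x'} (P(x'|y) / P(x|y)) ^ ρ`, together with `G ^ α ≤ G ^ N` for
`N = ⌈α⌉`, reduces `𝔼[G ^ α]` to a product over the `n` positions, because the joint law and the
likelihood ratios both factor bitwise. Each position contributes `𝔼[(1 + t ^ ρ) ^ N]`, where `t`
is the likelihood ratio of the wrong to the right input bit given the `m` channel outputs there.
Expanding binomially, this is `∑ₖ C(N, k) q(ρk) ^ m` with the Chernoff coefficient
`q(β) = ∑ᵥ P(v|0) ^ (1 - β) P(v|1) ^ β`, which is `< 1` for `0 < β < 1`. With `ρ = 1 / (N + 1)`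
this gives `0 ≤ E(m) ≤ log ∑ₖ C(N, k) q(ρk) ^ m → 0`.
-/

open Real Filter Finset

/-- Joint distribution of a uniform `X^n` and the outputs `Y' = (Y₍₁₎,…,Y₍ₘ₎)` of `m`
independent BSC(`δ`) channels applied to `X^n`. -/
noncomputable def bscJoint (δ : ℝ) (m n : ℕ) (x : Fin n → Bool)
    (y : Fin m → Fin n → Bool) : ℝ :=
  ((1 : ℝ) / 2) ^ n * ∏ j, ∏ i, (if y j i = x i then 1 - δ else δ)

/-- Conditional distribution of `X^n` given `Y' = y` for `m` independent BSC(`δ`) channels. -/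
noncomputable def bscCond (δ : ℝ) (m n : ℕ) (y : Fin m → Fin n → Bool)
    (x : Fin n → Bool) : ℝ :=
  bscJoint δ m n x y / ∑ x', bscJoint δ m n x' y

/-- Joint distribution of a uniform `X^n` and the output of a single BSC(`δ`). -/
noncomputable def bscJoint1 (δ : ℝ) (n : ℕ) (x y : Fin n → Bool) : ℝ :=
  ((1 : ℝ) / 2) ^ n * ∏ i, (if y i = x i then 1 - δ else δ)

/-- Conditional distribution of `X^n` given the output `y` of a single BSC(`δ`). -/
noncomputable def bscCond1 (δ : ℝ) (n : ℕ) (y x : Fin n → Bool) : ℝ :=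
  bscJoint1 δ n x y / ∑ x', bscJoint1 δ n x' y

open scoped Topology

lemma Real.prod_div_prod_rpow {ι : Type*} (s : Finset ι) {a b : ι → ℝ}
    (ha : ∀ i ∈ s, 0 ≤ a i) (hb : ∀ i ∈ s, 0 ≤ b i) (r : ℝ) :
    ((∏ i ∈ s, a i) / ∏ i ∈ s, b i) ^ r = ∏ i ∈ s, (a i / b i) ^ r := by
  rw [← Finset.prod_div_distrib]
  exact (Real.finsetProd_rpow s _ (fun i hi => div_nonneg (ha i hi) (hb i hi)) r).symm

lemma sum_rpow_prod_div_prod {ι α : Type*} [Fintype ι] [DecidableEq ι] [Fintype α]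
    {f : ι → α → ℝ} (hf : ∀ i a, 0 ≤ f i a) (x : ι → α) (r : ℝ) :
    ∑ x' : ι → α, ((∏ i, f i (x' i)) / ∏ i, f i (x i)) ^ r
      = ∏ i, ∑ a, (f i a / f i (x i)) ^ r := by
  rw [Fintype.prod_sum]
  exact Finset.sum_congr rfl fun x' _ =>
    Real.prod_div_prod_rpow _ (fun i _ => hf _ _) (fun i _ => hf _ _) r

lemma sum_sum_prod_apply_eq_pow {ι α β R : Type*} [Fintype ι] [DecidableEq ι] [Fintype α]
    [Fintype β] [CommSemiring R] (φ : α → β → R) :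
    ∑ x : ι → α, ∑ z : ι → β, ∏ i, φ (x i) (z i) = (∑ a, ∑ b, φ a b) ^ Fintype.card ι := by
  rw [← Finset.card_univ, ← Finset.prod_const, Fintype.prod_sum]
  refine Finset.sum_congr rfl fun x _ => ?_
  rw [Fintype.prod_sum]

namespace IsGuessingFunction

variable {S : Type*} [Fintype S] {q : S → ℝ} {G : S → ℕ}

lemma one_le (h : IsGuessingFunction q G) (x : S) : 1 ≤ G x :=
  (Finset.mem_Icc.mp (h.2.1 x)).1

lemma le_card_filter_le (h : IsGuessingFunction q G) (x : S) :
    G x ≤ #{x' | q x ≤ q x'} := by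
  classical
  obtain ⟨hinj, hmem, hord⟩ := h
  have hlater : #{x' | G x < G x'} ≤ Fintype.card S - G x := by
    calc #{x' | G x < G x'} ≤ #(Finset.Ioc (G x) (Fintype.card S)) :=
          Finset.card_le_card_of_injOn G
            (fun x' hx' => Finset.mem_Ioc.mpr
              ⟨(Finset.mem_filter.mp hx').2, (Finset.mem_Icc.mp (hmem x')).2⟩)
            hinj.injOn
      _ = Fintype.card S - G x := Nat.card_Ioc _ _
  have hearlier : #{x' | ¬ G x < G x'} ≤ #{x' | q x ≤ q x'} :=
    Finset.card_le_card fun x' hx' => by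
      simp only [Finset.mem_filter, Finset.mem_univ, true_and] at hx' ⊢
      exact not_lt.mp fun hlt => hx' (hord x x' hlt)
  have hsplit := Finset.card_filter_add_card_filter_not
    (s := Finset.univ) (fun x' => G x < G x')
  have hGx := (Finset.mem_Icc.mp (hmem x)).2
  rw [Finset.card_univ] at hsplit
  omega

/-- Arikan's bound. -/
lemma le_sum_rpow_div (h : IsGuessingFunction q G) (hq : ∀ x, 0 ≤ q x) {x : S}
    (hx : 0 < q x) {ρ : ℝ} (hρ : 0 ≤ ρ) : (G x : ℝ) ≤ ∑ x', (q x' / q x) ^ ρ := by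
  classical
  calc (G x : ℝ) ≤ #{x' | q x ≤ q x'} := by exact_mod_cast h.le_card_filter_le x
    _ = ∑ x' with q x ≤ q x', (1 : ℝ) := by rw [Finset.sum_const, nsmul_one]
    _ ≤ ∑ x' with q x ≤ q x', (q x' / q x) ^ ρ := Finset.sum_le_sum fun x' hx' =>
          Real.one_le_rpow ((one_le_div hx).mpr (Finset.mem_filter.mp hx').2) hρ
    _ ≤ ∑ x', (q x' / q x) ^ ρ := Finset.sum_le_sum_of_subset_of_nonneg
          (Finset.filter_subset _ _) fun x' _ _ => Real.rpow_nonneg (div_nonneg (hq x') hx.le) _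

end IsGuessingFunction

/-- Likelihood of the column `w` of the `m` channel outputs at one position, given the input
bit `b`. -/
noncomputable def bscLik (δ : ℝ) {m : ℕ} (b : Bool) (w : Fin m → Bool) : ℝ :=
  ∏ j, if w j = b then 1 - δ else δ

noncomputable def bscOdds (δ : ℝ) {m : ℕ} (b : Bool) (w : Fin m → Bool) : ℝ :=
  bscLik δ (!b) w / bscLik δ b w

/-- `∑ v, P(v|b) (P(v|!b) / P(v|b)) ^ β` for a single BSC; `0 / 0 = 0` makes it `0` at
`δ = 0 < β`. -/
noncomputable def chernoffCoeff (δ β : ℝ) : ℝ :=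
  (1 - δ) * (δ / (1 - δ)) ^ β + δ * ((1 - δ) / δ) ^ β

section BSC

variable {δ : ℝ}

lemma bscLik_nonneg (h0 : 0 ≤ δ) (h1 : δ ≤ 1) {m : ℕ} (b : Bool) (w : Fin m → Bool) :
    0 ≤ bscLik δ b w :=
  Finset.prod_nonneg fun j _ => by split <;> linarith

lemma bscOdds_nonneg (h0 : 0 ≤ δ) (h1 : δ ≤ 1) {m : ℕ} (b : Bool) (w : Fin m → Bool) :
    0 ≤ bscOdds δ b w :=
  div_nonneg (bscLik_nonneg h0 h1 _ _) (bscLik_nonneg h0 h1 _ _)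

lemma bscJoint_eq_prod (δ : ℝ) (m n : ℕ) (x : Fin n → Bool) (y : Fin m → Fin n → Bool) :
    bscJoint δ m n x y = ∏ i, (1 / 2 * bscLik δ (x i) fun j => y j i) := by
  rw [Finset.prod_mul_distrib, Finset.prod_const, Finset.card_univ, Fintype.card_fin,
    bscJoint, Finset.prod_comm]
  rfl

lemma sum_sum_prod_bscColumns {m n : ℕ} (φ : Bool → (Fin m → Bool) → ℝ) :
    ∑ y : Fin m → Fin n → Bool, ∑ x : Fin n → Bool, ∏ i, φ (x i) (fun j => y j i)
      = (∑ b, ∑ w, φ b w) ^ n := by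
  rw [Finset.sum_comm, ← Fintype.card_fin n, ← sum_sum_prod_apply_eq_pow, Fintype.card_fin]
  refine Finset.sum_congr rfl fun x _ => ?_
  exact Fintype.sum_equiv (Equiv.piComm fun _ _ => Bool) _ _ fun _ => rfl

lemma sum_bscLik_mul_bscOdds_rpow (h0 : 0 ≤ δ) (h1 : δ ≤ 1) (β : ℝ) (m : ℕ) (b : Bool) :
    ∑ w : Fin m → Bool, bscLik δ b w * bscOdds δ b w ^ β = chernoffCoeff δ β ^ m := by
  have hbit : ∀ v : Bool, 0 ≤ if v = b then 1 - δ else δ := fun v => by split <;> linarith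
  have hbit' : ∀ v : Bool, 0 ≤ if v = !b then 1 - δ else δ := fun v => by split <;> linarith
  calc ∑ w : Fin m → Bool, bscLik δ b w * bscOdds δ b w ^ β
      = ∑ w : Fin m → Bool, ∏ j, (if w j = b then 1 - δ else δ) *
          ((if w j = !b then 1 - δ else δ) / if w j = b then 1 - δ else δ) ^ β := by
        refine Finset.sum_congr rfl fun w _ => ?_
        rw [bscOdds, bscLik, bscLik,
          Real.prod_div_prod_rpow _ (fun j _ => hbit' _) (fun j _ => hbit _),
          Finset.prod_mul_distrib]
    _ = ∏ _j : Fin m, ∑ v : Bool, (if v = b then 1 - δ else δ) *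
          ((if v = !b then 1 - δ else δ) / if v = b then 1 - δ else δ) ^ β := by
        rw [Fintype.prod_sum]
    _ = chernoffCoeff δ β ^ m := by
        rw [Finset.prod_const, Finset.card_univ, Fintype.card_fin]
        cases b <;> simp [chernoffCoeff, add_comm]

lemma sum_bscLik (h0 : 0 ≤ δ) (h1 : δ ≤ 1) (m : ℕ) (b : Bool) :
    ∑ w : Fin m → Bool, bscLik δ b w = 1 := by
  simpa [chernoffCoeff] using sum_bscLik_mul_bscOdds_rpow h0 h1 0 m b

lemma sum_sum_bscJoint (h0 : 0 ≤ δ) (h1 : δ ≤ 1) (m n : ℕ) :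
    ∑ y : Fin m → Fin n → Bool, ∑ x : Fin n → Bool, bscJoint δ m n x y = 1 := by
  simp_rw [bscJoint_eq_prod]
  rw [sum_sum_prod_bscColumns fun b w => 1 / 2 * bscLik δ b w]
  simp_rw [← Finset.mul_sum, sum_bscLik h0 h1]
  norm_num

end BSC

/-- Contribution of one position to the bound on `𝔼[G ^ α]`, where `N ≥ α` and `ρ` is the
exponent of Arikan's bound. -/
noncomputable def bscWeight (δ ρ : ℝ) (N : ℕ) {m : ℕ} (b : Bool) (w : Fin m → Bool) : ℝ :=
  1 / 2 * bscLik δ b w * (1 + bscOdds δ b w ^ ρ) ^ N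

section BSCGuessing

variable {δ : ℝ}

lemma bscJoint_nonneg (h0 : 0 ≤ δ) (h1 : δ ≤ 1) (m n : ℕ) (x : Fin n → Bool)
    (y : Fin m → Fin n → Bool) : 0 ≤ bscJoint δ m n x y := by
  rw [bscJoint_eq_prod]
  exact Finset.prod_nonneg fun i _ => mul_nonneg (by norm_num) (bscLik_nonneg h0 h1 _ _)

lemma sum_rpow_bscLik_div_le (h0 : 0 ≤ δ) (h1 : δ ≤ 1) {ρ : ℝ} (hρ : 0 ≤ ρ) {m : ℕ}
    (b : Bool) (w : Fin m → Bool) :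
    ∑ a, (bscLik δ a w / bscLik δ b w) ^ ρ ≤ 1 + bscOdds δ b w ^ ρ := by
  have hself : (bscLik δ b w / bscLik δ b w) ^ ρ ≤ 1 :=
    Real.rpow_le_one (div_nonneg (bscLik_nonneg h0 h1 _ _) (bscLik_nonneg h0 h1 _ _))
      (div_self_le_one _) hρ
  cases b <;> simp only [Fintype.sum_bool, bscOdds, Bool.not_true, Bool.not_false] <;> linarith

lemma bscJoint_mul_rpow_le_prod_bscWeight (h0 : 0 ≤ δ) (h1 : δ ≤ 1) {α : ℝ} {N : ℕ}
    (hαN : α ≤ N) {ρ : ℝ} (hρ : 0 ≤ ρ) {m n : ℕ} {y : Fin m → Fin n → Bool}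
    {G : (Fin n → Bool) → ℕ} (hG : IsGuessingFunction (bscCond δ m n y) G) (x : Fin n → Bool) :
    bscJoint δ m n x y * (G x : ℝ) ^ α ≤ ∏ i, bscWeight δ ρ N (x i) fun j => y j i := by
  have hweight : ∀ i, 0 ≤ bscWeight δ ρ N (x i) fun j => y j i := fun i =>
    mul_nonneg (mul_nonneg (by norm_num) (bscLik_nonneg h0 h1 _ _))
      (pow_nonneg (add_nonneg zero_le_one (Real.rpow_nonneg (bscOdds_nonneg h0 h1 _ _) _)) _)
  rcases (bscJoint_nonneg h0 h1 m n x y).eq_or_lt with hJ | hJ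
  · rw [← hJ, zero_mul]
    exact Finset.prod_nonneg fun i _ => hweight i
  have hZ : 0 < ∑ x', bscJoint δ m n x' y := hJ.trans_le <| Finset.single_le_sum
    (fun x' _ => bscJoint_nonneg h0 h1 m n x' y) (Finset.mem_univ x)
  have hrank : (G x : ℝ) ≤ ∏ i, (1 + bscOdds δ (x i) (fun j => y j i) ^ ρ) :=
    calc (G x : ℝ) ≤ ∑ x', (bscCond δ m n y x' / bscCond δ m n y x) ^ ρ :=
          hG.le_sum_rpow_div (fun x' => div_nonneg (bscJoint_nonneg h0 h1 m n x' y) hZ.le)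
            (div_pos hJ hZ) hρ
      _ = ∑ x', (bscJoint δ m n x' y / bscJoint δ m n x y) ^ ρ := by
          simp only [bscCond, div_div_div_cancel_right₀ hZ.ne']
      _ = ∏ i, ∑ a, (bscLik δ a (fun j => y j i) / bscLik δ (x i) fun j => y j i) ^ ρ := by
          simp only [bscJoint_eq_prod]
          rw [sum_rpow_prod_div_prod (f := fun i a => 1 / 2 * bscLik δ a fun j => y j i)
            fun i a => mul_nonneg (by norm_num) (bscLik_nonneg h0 h1 _ _)]
          simp only [mul_div_mul_left _ _ (one_div_ne_zero (two_ne_zero (α := ℝ)))]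
      _ ≤ ∏ i, (1 + bscOdds δ (x i) (fun j => y j i) ^ ρ) :=
          Finset.prod_le_prod (fun i _ => Finset.sum_nonneg fun a _ => Real.rpow_nonneg
            (div_nonneg (bscLik_nonneg h0 h1 _ _) (bscLik_nonneg h0 h1 _ _)) _)
            fun i _ => sum_rpow_bscLik_div_le h0 h1 hρ _ _
  have hG1 : (1 : ℝ) ≤ G x := by exact_mod_cast hG.one_le x
  calc bscJoint δ m n x y * (G x : ℝ) ^ α ≤ bscJoint δ m n x y * (G x : ℝ) ^ N := by
        rw [← Real.rpow_natCast]
        gcongr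
    _ ≤ bscJoint δ m n x y * (∏ i, (1 + bscOdds δ (x i) (fun j => y j i) ^ ρ)) ^ N := by
        gcongr
    _ = ∏ i, bscWeight δ ρ N (x i) fun j => y j i := by
        rw [bscJoint_eq_prod, ← Finset.prod_pow, ← Finset.prod_mul_distrib]
        rfl

lemma sum_sum_bscJoint_mul_rpow_le (h0 : 0 ≤ δ) (h1 : δ ≤ 1) {α : ℝ} {N : ℕ}
    (hαN : α ≤ N) {ρ : ℝ} (hρ : 0 ≤ ρ) {m n : ℕ}
    {G : (Fin m → Fin n → Bool) → (Fin n → Bool) → ℕ}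
    (hG : ∀ y, IsGuessingFunction (bscCond δ m n y) (G y)) :
    ∑ y : Fin m → Fin n → Bool, ∑ x : Fin n → Bool, bscJoint δ m n x y * (G y x : ℝ) ^ α
      ≤ (∑ b, ∑ w : Fin m → Bool, bscWeight δ ρ N b w) ^ n :=
  (Finset.sum_le_sum fun y _ => Finset.sum_le_sum fun x _ =>
    bscJoint_mul_rpow_le_prod_bscWeight h0 h1 hαN hρ (hG y) x).trans_eq
    (sum_sum_prod_bscColumns _)

lemma one_le_sum_sum_bscJoint_mul_rpow (h0 : 0 ≤ δ) (h1 : δ ≤ 1) {α : ℝ} (hα : 0 ≤ α)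
    {m n : ℕ} {G : (Fin m → Fin n → Bool) → (Fin n → Bool) → ℕ}
    (hG : ∀ y, IsGuessingFunction (bscCond δ m n y) (G y)) :
    1 ≤ ∑ y : Fin m → Fin n → Bool, ∑ x : Fin n → Bool, bscJoint δ m n x y * (G y x : ℝ) ^ α := by
  rw [← sum_sum_bscJoint h0 h1 m n]
  gcongr with y _ x _
  exact le_mul_of_one_le_right (bscJoint_nonneg h0 h1 m n x y)
      (Real.one_le_rpow (by exact_mod_cast (hG y).one_le x) hα)

lemma sum_sum_bscWeight (h0 : 0 ≤ δ) (h1 : δ ≤ 1) (ρ : ℝ) (N m : ℕ) :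
    ∑ b, ∑ w : Fin m → Bool, bscWeight δ ρ N b w
      = ∑ k ∈ Finset.range (N + 1), (N.choose k : ℝ) * chernoffCoeff δ (ρ * k) ^ m := by
  have hbinom : ∀ b (w : Fin m → Bool), bscWeight δ ρ N b w = ∑ k ∈ Finset.range (N + 1),
      (N.choose k : ℝ) * (1 / 2 * (bscLik δ b w * bscOdds δ b w ^ (ρ * k))) := by
    intro b w
    rw [bscWeight, add_comm, add_pow, Finset.mul_sum]
    refine Finset.sum_congr rfl fun k _ => ?_
    rw [Real.rpow_mul (bscOdds_nonneg h0 h1 b w), Real.rpow_natCast]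
    ring
  have hcolumns : ∀ b, ∑ w : Fin m → Bool, bscWeight δ ρ N b w
      = ∑ k ∈ Finset.range (N + 1), (N.choose k : ℝ) * (1 / 2 * chernoffCoeff δ (ρ * k) ^ m) := by
    intro b
    simp_rw [hbinom]
    rw [Finset.sum_comm]
    simp_rw [← Finset.mul_sum, sum_bscLik_mul_bscOdds_rpow h0 h1]
  rw [Fintype.sum_bool, hcolumns, hcolumns, ← Finset.sum_add_distrib]
  refine Finset.sum_congr rfl fun k _ => ?_
  ring

end BSCGuessing

section Chernoff

variable {δ : ℝ}

lemma chernoffCoeff_nonneg (h0 : 0 ≤ δ) (h1 : δ ≤ 1) (β : ℝ) : 0 ≤ chernoffCoeff δ β := by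
  have : 0 ≤ 1 - δ := by linarith
  unfold chernoffCoeff
  positivity

lemma chernoffCoeff_lt_one (h0 : 0 ≤ δ) (h2 : δ < 1 / 2) {β : ℝ} (hβ0 : 0 < β) (hβ1 : β < 1) :
    chernoffCoeff δ β < 1 := by
  rcases h0.eq_or_lt with rfl | hδ
  · simp [chernoffCoeff, Real.zero_rpow hβ0.ne']
  have h1δ : 0 < 1 - δ := by linarith
  set r := δ / (1 - δ) with hr
  have hr0 : 0 < r := div_pos hδ h1δ
  have hr1 : r < 1 := (div_lt_one h1δ).mpr (by linarith)
  set u := r ^ β with hu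
  have hu0 : 0 < u := Real.rpow_pos_of_pos hr0 β
  have hu1 : u < 1 := Real.rpow_lt_one hr0.le hr1 hβ0
  have hru : r < u := by
    simpa using Real.rpow_lt_rpow_of_exponent_gt hr0 hr1 hβ1
  have hδu : δ < (1 - δ) * u := by rwa [hr, div_lt_iff₀ h1δ, mul_comm] at hru
  have hcoeff : chernoffCoeff δ β = (1 - δ) * u + δ / u := by
    rw [chernoffCoeff, ← hr, ← inv_div, ← hr, Real.inv_rpow hr0.le, div_eq_mul_inv δ u]
  rw [hcoeff, ← sub_pos]
  have hgap : 1 - ((1 - δ) * u + δ / u) = (1 - u) * ((1 - δ) * u - δ) / u := by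
    field_simp
    ring
  rw [hgap]
  exact div_pos (mul_pos (by linarith) (by linarith)) hu0

lemma tendsto_sum_choose_mul_chernoffCoeff_pow (h0 : 0 ≤ δ) (h2 : δ < 1 / 2) {ρ : ℝ} {N : ℕ}
    (hρ : 0 < ρ) (hρN : ρ * N < 1) :
    Tendsto (fun m : ℕ => ∑ k ∈ Finset.range (N + 1),
      (N.choose k : ℝ) * chernoffCoeff δ (ρ * k) ^ m) atTop (𝓝 1) := by
  have hterm : ∀ k ∈ Finset.range N, Tendsto (fun m : ℕ =>
      (N.choose (k + 1) : ℝ) * chernoffCoeff δ (ρ * (k + 1 : ℕ)) ^ m) atTop (𝓝 0) := by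
    intro k hk
    have hkN : ((k + 1 : ℕ) : ℝ) ≤ N := by exact_mod_cast Finset.mem_range.mp hk
    have hβ1 : ρ * (k + 1 : ℕ) < 1 := (mul_le_mul_of_nonneg_left hkN hρ.le).trans_lt hρN
    simpa using (tendsto_pow_atTop_nhds_zero_of_lt_one
      (chernoffCoeff_nonneg h0 (by linarith) _)
      (chernoffCoeff_lt_one h0 h2 (by positivity) hβ1)).const_mul (N.choose (k + 1) : ℝ)
  simp_rw [Finset.sum_range_succ']
  simpa [chernoffCoeff] using (tendsto_finsetSum _ hterm).add_const 1

end Chernoff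

lemma mem_Icc_of_tendsto_inv_mul_logb {S : ℕ → ℝ} {c E : ℝ} (hS : ∀ n, 1 ≤ S n)
    (hc : ∀ n, S n ≤ c ^ n)
    (hE : Tendsto (fun n : ℕ => (1 / (n : ℝ)) * Real.logb 2 (S n)) atTop (𝓝 E)) :
    0 ≤ E ∧ E ≤ Real.logb 2 c := by
  refine ⟨ge_of_tendsto' hE fun n => mul_nonneg (by positivity)
    (Real.logb_nonneg one_lt_two (hS n)), le_of_tendsto hE ?_⟩
  filter_upwards [eventually_gt_atTop 0] with n hn
  have hn' : (0 : ℝ) < n := by exact_mod_cast hn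
  calc (1 / (n : ℝ)) * Real.logb 2 (S n) ≤ (1 / (n : ℝ)) * Real.logb 2 (c ^ n) := by
        gcongr
        · exact one_lt_two
        · linarith [hS n]
        · exact hc n
    _ = Real.logb 2 c := by
        rw [Real.logb_pow]
        field_simp

/-- Lemma 2 of the paper: the centralized guesswork exponent with `m`
agents under BSC(`δ`) side information (with `δ < 1/2`) tends to `0` as `m → ∞`. -/
theorem centralized_bsc_exponent_tendsto_zero
    (δ : ℝ) (hδ : δ ∈ Set.Ico (0 : ℝ) (1 / 2)) (α : ℝ) (hα : 0 < α)
    (G : ∀ m n, (Fin m → Fin n → Bool) → (Fin n → Bool) → ℕ)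
    (hG : ∀ m n y, IsGuessingFunction (bscCond δ m n y) (G m n y))
    (E : ℕ → ℝ)
    (hE : ∀ m, 1 ≤ m →
      Tendsto
        (fun n : ℕ => (1 / (n : ℝ)) *
          Real.logb 2 (∑ y : Fin m → Fin n → Bool, ∑ x : Fin n → Bool,
            bscJoint δ m n x y * (G m n y x : ℝ) ^ α))
        atTop (nhds (E m))) :
    Tendsto E atTop (nhds 0) := by
  obtain ⟨h0, h2⟩ := hδ
  have h1 : δ ≤ 1 := by linarith
  set N := ⌈α⌉₊
  set ρ : ℝ := 1 / (N + 1)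
  have hρ : 0 < ρ := by positivity
  have hρN : ρ * N < 1 := by
    rw [one_div_mul_eq_div, div_lt_one (by positivity)]
    linarith
  set c := fun m : ℕ => ∑ k ∈ Finset.range (N + 1),
    (N.choose k : ℝ) * chernoffCoeff δ (ρ * k) ^ m
  have hbounds : ∀ m, 1 ≤ m → 0 ≤ E m ∧ E m ≤ Real.logb 2 (c m) := fun m hm =>
    mem_Icc_of_tendsto_inv_mul_logb
      (fun n => one_le_sum_sum_bscJoint_mul_rpow h0 h1 hα.le (hG m n))
      (fun n => (sum_sum_bscJoint_mul_rpow_le h0 h1 (Nat.le_ceil α) hρ.le (hG m n)).trans_eq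
        (by rw [sum_sum_bscWeight h0 h1]))
      (hE m hm)
  have hlogc : Tendsto (fun m => Real.logb 2 (c m)) atTop (𝓝 0) := by
    have := (Real.continuousAt_logb (b := 2) one_ne_zero).tendsto.comp
      (tendsto_sum_choose_mul_chernoffCoeff_pow h0 h2 hρ hρN)
    rwa [Real.logb_one] at this
  refine tendsto_of_tendsto_of_tendsto_of_le_of_le' tendsto_const_nhds hlogc ?_ ?_ <;>
    filter_upwards [eventually_ge_atTop 1] with m hm
  exacts [(hbounds m hm).1, (hbounds m hm).2]
end
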